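/- For all p ≥ 2 and k ≥ 2, the number of canonical k-connected T-trees is strictly smaller than the total number of k-connected T-trees: M_{p,k} < N_{p,k}. -/
import Mathlib


/-- `Nk k p`: number of ordered trees with 0..k children per node and height
    at most `p` (k-connected T-trees). -/
def Nk (k : ℕ) : ℕ → ℕ
  | 0 => 1
  | p + 1 => ∑ i ∈ Finset.range (k + 1), (Nk k p) ^ i

/-- `Mk k p`: number of such trees up to reordering of children, i.e. with
    ⋞-sorted children lists (canonical k-connected T-trees). -/
def Mk (k : ℕ) : ℕ → ℕ
  | 0 => 1
  | p + 1 => Nat.choose (Mk k p + k) k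

lemma choose_le_pow_aux (k m : ℕ) : (m + k).choose k ≤ (m + 1) ^ k := by
  induction k with
  | zero => simp
  | succ k ih =>
    have h := Nat.add_one_mul_choose_eq (m + k) k
    have h2 : (m + (k + 1)).choose (k + 1) * (k + 1) ≤ (m + 1) ^ (k + 1) * (k + 1) := by
      calc (m + (k + 1)).choose (k + 1) * (k + 1)
          = (m + k + 1) * (m + k).choose k := by
            rw [show m + (k + 1) = (m + k) + 1 from rfl, ← h]
        _ ≤ ((k + 1) * (m + 1)) * (m + 1) ^ k := by
            apply Nat.mul_le_mul _ ih; nlinarith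
        _ = (m + 1) ^ (k + 1) * (k + 1) := by ring
    exact Nat.le_of_mul_le_mul_right h2 (Nat.succ_pos k)

lemma Nk_pos (k p : ℕ) : 1 ≤ Nk k p := by
  cases p with
  | zero => simp [Nk]
  | succ p =>
    rw [Nk]
    calc 1 = (Nk k p) ^ 0 := by simp
      _ ≤ ∑ i ∈ Finset.range (k + 1), (Nk k p) ^ i :=
        Finset.single_le_sum (fun i _ => Nat.zero_le _) (Finset.mem_range.mpr (Nat.succ_pos k))

lemma pow_lt_Nk (k p : ℕ) (m : ℕ) (hk : 1 ≤ k) (hm : m ≤ Nk k p) : m ^ k < Nk k (p + 1) := by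
  rw [Nk, Finset.sum_range_succ]
  have h1 : 1 ≤ ∑ i ∈ Finset.range k, (Nk k p) ^ i :=
    calc 1 = (Nk k p) ^ 0 := by simp
      _ ≤ _ := Finset.single_le_sum (fun i _ => Nat.zero_le _) (Finset.mem_range.mpr hk)
  have h2 : m ^ k ≤ (Nk k p) ^ k := Nat.pow_le_pow_left hm k
  omega

/-- For all `p ≥ 2` and `k ≥ 2`, the number of canonical k-connected T-trees
    is strictly smaller than the total number of k-connected T-trees:
    `M_{p,k} < N_{p,k}`. -/
theorem Mk_lt_Nk : ∀ p k : ℕ, 2 ≤ p → 2 ≤ k → Mk k p < Nk k p := by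
  have key : ∀ k, 2 ≤ k → ∀ q, Mk k (q + 2) < Nk k (q + 2) := by
    intro k hk q
    induction q with
    | zero =>
      have hM1 : Mk k 1 = k + 1 := by
        simp [Mk, Nat.add_comm 1 k, Nat.choose_succ_self_right]
      have hN1 : Nk k 1 = k + 1 := by
        simp [Nk]
      have hM2 : Mk k 2 = (2 * k + 1).choose k := by
        rw [show (2:ℕ) = 1 + 1 from rfl, Mk, hM1]
        congr 1; ring
      rw [hM2]
      rcases Nat.lt_or_ge k 3 with h3 | h3
      · interval_cases k
        · show (2 * 2 + 1).choose 2 < Nk 2 (0 + 2)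
          rw [show (0:ℕ) + 2 = 1 + 1 from rfl, Nk, hN1]; decide
      · have h4 : (2 * k + 1).choose k ≤ 4 ^ k := Nat.choose_middle_le_pow k
        have h5 : (4:ℕ) ^ k ≤ (k + 1) ^ k := Nat.pow_le_pow_left (by omega) k
        have h6 : (k + 1) ^ k < Nk k (0 + 2) :=
          pow_lt_Nk k 1 (k + 1) (by omega) (by rw [hN1])
        omega
    | succ q ih =>
      have h1 : Mk k (q + 3) = (Mk k (q + 2) + k).choose k := rfl
      have h2 : (Mk k (q + 2) + k).choose k ≤ (Mk k (q + 2) + 1) ^ k :=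
        choose_le_pow_aux k _
      have h3 : (Mk k (q + 2) + 1) ^ k < Nk k (q + 3) :=
        pow_lt_Nk k (q + 2) _ (by omega) (by omega)
      show Mk k (q + 3) < Nk k (q + 3)
      omega
  intro p k hp hk
  obtain ⟨q, rfl⟩ : ∃ q, p = q + 2 := ⟨p - 2, by omega⟩
  exact key k hk q
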